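/- (Monotonicity of the constraint relative to the central-path neighborhood.) Let ζ ∈ [0,1) and let x : ℝ → E be a GDAM trajectory, with ∇f(x(t)) ≠ 0 and ∇g(x(t)) ≠ 0 at a time t. If cos θ(x(t)) < −ζ then the derivative of t ↦ g(x(t)) at t is strictly positive (g increases), and if cos θ(x(t)) > −ζ then this derivative is strictly negative (g decreases). -/

import Mathlib

open RealInnerProductSpace InnerProductGeometry

/- Along a GDAM trajectory the chain rule gives
`(g ∘ x)' = ⟪∇g, s_ζ⟫ = -‖∇g‖ (cos θ + ζ)`, so the sign of `(g ∘ x)'` is the sign of `-(cos θ + ζ)`. -/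

theorem HasGradientAt.comp_hasDerivAt {E : Type*} [NormedAddCommGroup E] [InnerProductSpace ℝ E]
    [CompleteSpace E] {g : E → ℝ} {G : E} {x : ℝ → E} {v : E} {t : ℝ}
    (hg : HasGradientAt g G (x t)) (hx : HasDerivAt x v t) :
    HasDerivAt (fun s => g (x s)) ⟪G, v⟫ t :=
  hg.hasFDerivAt.comp_hasDerivAt t hx

theorem inner_neg_normalize_sub_smul_normalize {E : Type*} [NormedAddCommGroup E]
    [InnerProductSpace ℝ E] (F : E) {G : E} (hG : G ≠ 0) (ζ : ℝ) :
    ⟪G, -(‖F‖⁻¹ • F) - ζ • (‖G‖⁻¹ • G)⟫ = -‖G‖ * (Real.cos (angle F G) + ζ) := by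
  have hG' : ‖G‖ ≠ 0 := norm_ne_zero_iff.mpr hG
  rw [cos_angle, inner_sub_right, inner_neg_right, inner_smul_right, inner_smul_right,
    inner_smul_right, real_inner_self_eq_norm_sq, real_inner_comm]
  field_simp
  ring

theorem gdam_constraint_monotonicity_general {n : ℕ}
    (f g : EuclideanSpace ℝ (Fin n) → ℝ)
    (hg : ContDiff ℝ 2 g)
    (ζ : ℝ)
    (x : ℝ → EuclideanSpace ℝ (Fin n)) (t : ℝ)
    (hgg : gradient g (x t) ≠ 0)
    (hx : HasDerivAt x
      (-(‖gradient f (x t)‖⁻¹ • gradient f (x t))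
        - ζ • (‖gradient g (x t)‖⁻¹ • gradient g (x t))) t) :
    ((⟪gradient f (x t), gradient g (x t)⟫ /
        (‖gradient f (x t)‖ * ‖gradient g (x t)‖)) < -ζ →
      0 < deriv (fun s => g (x s)) t) ∧
    ((-ζ < ⟪gradient f (x t), gradient g (x t)⟫ /
        (‖gradient f (x t)‖ * ‖gradient g (x t)‖)) →
      deriv (fun s => g (x s)) t < 0) := by
  have hgrad : HasGradientAt g (gradient g (x t)) (x t) :=
    (hg.differentiable (by norm_num) (x t)).hasGradientAt
  have hderiv : deriv (fun s => g (x s)) t =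
      -‖gradient g (x t)‖ * (Real.cos (angle (gradient f (x t)) (gradient g (x t))) + ζ) := by
    rw [(hgrad.comp_hasDerivAt hx).deriv, inner_neg_normalize_sub_smul_normalize _ hgg]
  have hnorm : 0 < ‖gradient g (x t)‖ := norm_pos_iff.mpr hgg
  rw [← cos_angle, hderiv]
  constructor
  · intro hcos
    exact mul_pos_of_neg_of_neg (neg_neg_of_pos hnorm) (by linarith)
  · intro hcos
    exact mul_neg_of_neg_of_pos (neg_neg_of_pos hnorm) (by linarith)

/-- Monotonicity of the constraint relative to the central-path
neighborhood: inside `Θ_ζ = {cos θ < -ζ}` the constraint `g` strictly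
increases along the trajectory; outside (`cos θ > -ζ`) it strictly decreases. -/
theorem gdam_constraint_monotonicity {n : ℕ}
    (f g : EuclideanSpace ℝ (Fin n) → ℝ)
    (hf : ContDiff ℝ 2 f) (hg : ContDiff ℝ 2 g)
    (ζ : ℝ) (hζ : ζ ∈ Set.Ico (0 : ℝ) 1)
    (x : ℝ → EuclideanSpace ℝ (Fin n)) (t : ℝ)
    (hgf : gradient f (x t) ≠ 0)
    (hgg : gradient g (x t) ≠ 0)
    (hx : HasDerivAt x
      (-(‖gradient f (x t)‖⁻¹ • gradient f (x t))
        - ζ • (‖gradient g (x t)‖⁻¹ • gradient g (x t))) t) :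
    ((⟪gradient f (x t), gradient g (x t)⟫ /
        (‖gradient f (x t)‖ * ‖gradient g (x t)‖)) < -ζ →
      0 < deriv (fun s => g (x s)) t) ∧
    ((-ζ < ⟪gradient f (x t), gradient g (x t)⟫ /
        (‖gradient f (x t)‖ * ‖gradient g (x t)‖)) →
      deriv (fun s => g (x s)) t < 0) :=
  gdam_constraint_monotonicity_general f g hg ζ x t hgg hx
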